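/- For every z ∈ 𝔻 and every g ∈ G, the matrix coefficient ⟨π_z(g)δ_x, δ_x⟩ equals z^{d(x, g·x)}. In particular, ⟨c_z(x,y)δ_y, δ_x⟩ = z^{d(x,y)} for all vertices x, y of T. -/

import Mathlib

noncomputable section

open scoped ComplexConjugate

/-- `ℓ²(X)`: the Hilbert space of square-summable complex functions on `X`. -/
abbrev ell2 (X : Type) : Type := lp (fun _ : X => ℂ) 2

/-- The Dirac function `δ_v` at a vertex `v`. -/
noncomputable def delta {X : Type} [DecidableEq X] (v : X) : ell2 X :=
  lp.single 2 v (1 : ℂ)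

/-- `w = √(1 − z²)`, using the principal branch of the square root, which is
holomorphic off the negative real axis and positive on the positive reals. -/
noncomputable def W (z : ℂ) : ℂ := (1 - z ^ 2) ^ ((1 : ℂ) / 2)

/-- The defining property of the edge operator `c_z(x,y)` for adjacent vertices
`x, y`: it sends `δ_x ↦ wδ_x − zδ_y`, `δ_y ↦ wδ_y + zδ_x`, and fixes `δ_v` for
every other vertex `v`. -/
def IsEdgeOp {X : Type} [DecidableEq X] (z : ℂ) (x y : X)
    (A : ell2 X →L[ℂ] ell2 X) : Prop :=
  A (delta x) = W z • delta x - z • delta y ∧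
  A (delta y) = W z • delta y + z • delta x ∧
  ∀ v : X, v ≠ x → v ≠ y → A (delta v) = delta v

/-- The product `f(v₀,v₁) * f(v₁,v₂) * ⋯ * f(v_{n−1},v_n)` along a walk
`v₀, v₁, …, v_n`. -/
def walkProd {X : Type} {T : SimpleGraph X} {E : Type} [Monoid E]
    (f : X → X → E) : {a b : X} → T.Walk a b → E
  | _, _, SimpleGraph.Walk.nil => 1
  | _, _, SimpleGraph.Walk.cons (u := u) (v := v) _ p => f u v * walkProd f p

/-! The edge operator `c(u,v)` fixes every coordinate other than those at `u` and `v`, and its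
coordinate at `u` is `w f(u) + z f(v)`. Along a geodesic `x = v₀, v₁, …, vₙ = y` the vector
`φ = c(v₁,v₂) ⋯ c(v_{n-1},vₙ) δ_y` is supported on `{v₁, …, vₙ}`, which does not contain `v₀`;
so the coordinate of `c(v₀,v₁) φ` at `v₀` is `z φ(v₁)`, and induction gives `z ^ n`.
The statement about `π_z` is the case `y = g • x`, as `π(g) δ_x = δ_{g • x}`. -/

section Coordinates

variable {X : Type}

@[simp] lemma ell2.add_apply (f g : ell2 X) (w : X) : (f + g) w = f w + g w := rfl

@[simp] lemma ell2.sub_apply (f g : ell2 X) (w : X) : (f - g) w = f w - g w := rfl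

@[simp] lemma ell2.smul_apply (c : ℂ) (f : ell2 X) (w : X) : (c • f) w = c * f w := rfl

variable [DecidableEq X]

lemma delta_apply (v w : X) : delta v w = if w = v then 1 else 0 := by
  simp [delta, lp.single_apply, Pi.single_apply]

lemma inner_delta_left (v : X) (f : ell2 X) : inner ℂ (delta v) f = f v := by
  simp [delta, lp.inner_single_left]

lemma apply_eq_tsum (A : ell2 X →L[ℂ] ell2 X) (f : ell2 X) (w : X) :
    A f w = ∑' v, f v * A (delta v) w := by
  have hf := lp.hasSum_single (p := 2) (by simp) f
  refine (((lp.evalCLM ℂ _ 2 w).comp A).hasSum hf).tsum_eq.symm.trans (tsum_congr fun v => ?_)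
  have : lp.single 2 v (f v) = f v • delta v := by
    rw [delta, ← lp.single_smul, smul_eq_mul, mul_one]
  simp [this, lp.evalCLM]

end Coordinates

namespace IsEdgeOp

variable {X : Type} [DecidableEq X] {z : ℂ} {x y : X} {A : ell2 X →L[ℂ] ell2 X}

lemma apply_of_ne (hA : IsEdgeOp z x y A) (f : ell2 X) {w : X} (hwx : w ≠ x) (hwy : w ≠ y) :
    A f w = f w := by
  obtain ⟨hx, hy, hother⟩ := hA
  rw [apply_eq_tsum, tsum_eq_single w fun v hvw => ?_, hother w hwx hwy, delta_apply, if_pos rfl,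
    mul_one]
  by_cases hvx : v = x
  · simp [hvx, hx, delta_apply, hwx, hwy]
  by_cases hvy : v = y
  · simp [hvy, hy, delta_apply, hwx, hwy]
  · simp [hother v hvx hvy, delta_apply, Ne.symm hvw]

lemma apply_left (hA : IsEdgeOp z x y A) (hxy : x ≠ y) (f : ell2 X) :
    A f x = W z * f x + z * f y := by
  obtain ⟨hx, hy, hother⟩ := hA
  rw [apply_eq_tsum, tsum_eq_sum (s := {x, y}) fun v hv => ?_, Finset.sum_pair hxy, hx, hy]
  · simp [delta_apply, hxy, mul_comm]
  · simp only [Finset.mem_insert, Finset.mem_singleton, not_or] at hv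
    simp [hother v hv.1 hv.2, delta_apply, Ne.symm hv.1]

end IsEdgeOp

section Walk

variable {X : Type} [DecidableEq X] {T : SimpleGraph X} {z : ℂ} {c : X → X → (ell2 X →L[ℂ] ell2 X)}

lemma walkProd_delta_apply_of_notMem_support
    (hedge : ∀ u v : X, T.Adj u v → IsEdgeOp z u v (c u v)) {x y : X} (p : T.Walk x y) {w : X}
    (hw : w ∉ p.support) : walkProd c p (delta y) w = 0 := by
  induction p with
  | nil =>
    simp only [SimpleGraph.Walk.support_nil, List.mem_singleton] at hw
    simp [walkProd, delta_apply, hw]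
  | @cons x u y hxu q ih =>
    simp only [SimpleGraph.Walk.support_cons, List.mem_cons, not_or] at hw
    have hwu : w ≠ u := fun h => hw.2 (h ▸ q.start_mem_support)
    exact ((hedge x u hxu).apply_of_ne _ hw.1 hwu).trans (ih hw.2)

lemma SimpleGraph.Walk.IsPath.walkProd_delta_apply_start
    (hedge : ∀ u v : X, T.Adj u v → IsEdgeOp z u v (c u v)) {x y : X} {p : T.Walk x y}
    (hp : p.IsPath) : walkProd c p (delta y) x = z ^ p.length := by
  induction p with
  | nil => simp [walkProd, delta_apply]
  | @cons x u y hxu q ih =>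
    have hx : x ∉ q.support := (SimpleGraph.Walk.cons_isPath_iff hxu q).1 hp |>.2
    change c x u (walkProd c q (delta y)) x = _
    rw [(hedge x u hxu).apply_left hxu.ne, walkProd_delta_apply_of_notMem_support hedge q hx,
      ih hp.of_cons, SimpleGraph.Walk.length_cons, pow_succ]
    ring

end Walk

lemma inner_delta_apply_delta_eq_pow_dist {X : Type} [DecidableEq X] {T : SimpleGraph X}
    (hconn : T.Connected) {z : ℂ} {c : X → X → (ell2 X →L[ℂ] ell2 X)}
    (hedge : ∀ u v : X, T.Adj u v → IsEdgeOp z u v (c u v))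
    (hgeo : ∀ u v : X, ∀ p : T.Walk u v, p.length = T.dist u v → c u v = walkProd c p)
    (x y : X) : inner ℂ (delta x) (c x y (delta y)) = z ^ T.dist x y := by
  obtain ⟨p, hp, hlen⟩ := hconn.exists_path_of_dist x y
  rw [inner_delta_left, hgeo x y p hlen, hp.walkProd_delta_apply_start hedge, hlen]

theorem pi_z_matrix_coefficient_general {X : Type} [DecidableEq X] (T : SimpleGraph X)
    (hconn : T.Connected)
    (c : ℂ → X → X → (ell2 X →L[ℂ] ell2 X))
    (hedge : ∀ z ∈ Metric.ball (0 : ℂ) 1, ∀ u v : X, T.Adj u v →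
      IsEdgeOp z u v (c z u v))
    (hgeo : ∀ z ∈ Metric.ball (0 : ℂ) 1, ∀ u v : X, ∀ p : T.Walk u v,
      p.length = T.dist u v → c z u v = walkProd (c z) p)
    {G : Type} [Group G] [MulAction G X]
    (U : G → (ell2 X →L[ℂ] ell2 X))
    (hU : ∀ (g : G) (v : X), U g (delta v) = delta (g • v))
    (x₀ : X) :
    ∀ z ∈ Metric.ball (0 : ℂ) 1,
      (∀ g : G,
        (inner ℂ (delta x₀) ((c z x₀ (g • x₀) * U g) (delta x₀)) : ℂ) =
          z ^ (T.dist x₀ (g • x₀))) ∧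
      (∀ x y : X, (inner ℂ (delta x) (c z x y (delta y)) : ℂ) = z ^ (T.dist x y)) := by
  intro z hz
  have hcoeff := inner_delta_apply_delta_eq_pow_dist hconn (hedge z hz) (hgeo z hz)
  refine ⟨fun g => ?_, hcoeff⟩
  change inner ℂ _ (c z x₀ (g • x₀) (U g (delta x₀))) = _
  rw [hU g x₀]
  exact hcoeff x₀ (g • x₀)

/-- For every `z ∈ 𝔻` and every `g ∈ G`, the matrix coefficient
`⟨π_z(g)δ_x, δ_x⟩` equals `z^{d(x, g·x)}`.  In particular
`⟨c_z(x,y)δ_y, δ_x⟩ = z^{d(x,y)}` for all vertices `x, y` of `T`. -/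
theorem pi_z_matrix_coefficient {X : Type} [DecidableEq X] (T : SimpleGraph X)
    (hconn : T.Connected) (hacyc : T.IsAcyclic)
    (c : ℂ → X → X → (ell2 X →L[ℂ] ell2 X))
    (hedge : ∀ z ∈ Metric.ball (0 : ℂ) 1, ∀ u v : X, T.Adj u v →
      IsEdgeOp z u v (c z u v))
    (hgeo : ∀ z ∈ Metric.ball (0 : ℂ) 1, ∀ u v : X, ∀ p : T.Walk u v,
      p.length = T.dist u v → c z u v = walkProd (c z) p)
    {G : Type} [Group G] [MulAction G X]
    (hact : ∀ (g : G) (u v : X), T.Adj u v ↔ T.Adj (g • u) (g • v))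
    (U : G → (ell2 X →L[ℂ] ell2 X))
    (hU : ∀ (g : G) (v : X), U g (delta v) = delta (g • v))
    (x₀ : X) :
    ∀ z ∈ Metric.ball (0 : ℂ) 1,
      (∀ g : G,
        (inner ℂ (delta x₀) ((c z x₀ (g • x₀) * U g) (delta x₀)) : ℂ) =
          z ^ (T.dist x₀ (g • x₀))) ∧
      (∀ x y : X, (inner ℂ (delta x) (c z x y (delta y)) : ℂ) = z ^ (T.dist x y)) :=
  pi_z_matrix_coefficient_general T hconn c hedge hgeo U hU x₀
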